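/- arXiv:2107.03536 — 3 statements merged into one kernel-verified Lean document; each statement's English description precedes it below -/
import Mathlib

section
/- Let q ∈ ℂ, q ≠ 0, and let Ê_q(x) = ∑_{n≥0} (-1)ⁿ q^{n(n-1)/2} xⁿ in ℂ[[x]]. Then its square y = Ê_q(x)² satisfies the second-order q-difference equation (x σ_q + 1)(x² σ_q − 1) y = x − 1, i.e., writing z(x) = x² y(qx) − y(x), one has x z(qx) + z(x) = x − 1 in ℂ[[x]]. -/
noncomputable section

/-- The `q`-Euler series `Ê_q(x) = ∑_{n≥0} (-1)ⁿ q^{n(n-1)/2} xⁿ`. -/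
def qEuler (q : ℂ) : PowerSeries ℂ :=
  PowerSeries.mk fun n => (-1) ^ n * q ^ (n * (n - 1) / 2)

/-- Key first-order equation: `Ê_q(x) + x Ê_q(qx) = 1`. -/
lemma qEuler_key (q : ℂ) :
    PowerSeries.X * PowerSeries.rescale q (qEuler q) + qEuler q = 1 := by
  ext n
  rcases n with _ | m
  · simp [qEuler]
  · simp [PowerSeries.coeff_succ_X_mul, PowerSeries.coeff_rescale, qEuler,
      PowerSeries.coeff_one, pow_succ]
    have h : m + m * (m - 1) / 2 = (m + 1) * m / 2 := by
      have := Nat.even_mul_pred_self m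
      have h2 : (m + 1) * m = m * (m - 1) + 2 * m := by
        cases m with | zero => rfl | succ k => simp; ring
      omega
    rw [mul_comm (q ^ m), mul_assoc, ← pow_add, Nat.add_comm, h]
    ring

/-- The square `y = Ê_q²` satisfies `(x σ_q + 1)(x² σ_q − 1) y = x − 1`:
with `z = x² σ_q(y) − y`, one has `x σ_q(z) + z = x − 1`. -/
theorem qEuler_sq_functional_equation (q : ℂ) (hq : q ≠ 0) :
    PowerSeries.X *
        PowerSeries.rescale q
          (PowerSeries.X ^ 2 * PowerSeries.rescale q ((qEuler q) ^ 2) - (qEuler q) ^ 2) +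
      (PowerSeries.X ^ 2 * PowerSeries.rescale q ((qEuler q) ^ 2) - (qEuler q) ^ 2)
    = PowerSeries.X - 1 := by
  have h1 : PowerSeries.X ^ 2 * PowerSeries.rescale q ((qEuler q) ^ 2) - (qEuler q) ^ 2
      = 1 - 2 * qEuler q := by
    rw [map_pow]
    linear_combination (PowerSeries.X * PowerSeries.rescale q (qEuler q) - qEuler q + 1) *
      qEuler_key q
  rw [h1]
  have h2 : PowerSeries.rescale q (1 - 2 * qEuler q)
      = 1 - 2 * PowerSeries.rescale q (qEuler q) := by
    rw [map_sub, map_one, map_mul, map_ofNat]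
  rw [h2]
  linear_combination (-2 : PowerSeries ℂ) * qEuler_key q

end
end

section
/- Let q ∈ ℂ, q ≠ 0, let f, P ∈ ℂ((x)) with P ≠ 0 and x·σ_q(f) + f = P. Define P₀ = 0 and P_n = ∑_{k=0}^{n-1}(−x σ_q)ᵏ P for n ≥ 1, and for 1 ≤ k ≤ n define operators L_{n,1} = (1/P₁)(xⁿ σ_q − (−1)ⁿ) and L_{n,k+1} = (1/P_{k+1})(x^{n−k} σ_q − (−1)^{n−k}) ∘ L_{n,k}. Then for all 1 ≤ k ≤ n: L_{n,k}(fⁿ) = (−1)^{k(2n−k+1)/2} ∑_{j=0}^{k} (f − P_j)ⁿ / A_{k,j}, where A_{k,j} = ∏_{ℓ≠j, 0≤ℓ≤k} (P_j − P_ℓ). -/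
noncomputable section

/-- The `q`-dilation operator `σ_q` on formal Laurent series: `(σ_q f)(x) = f(qx)`,
i.e. the coefficient of `xⁿ` is multiplied by `qⁿ`. -/
def sigmaq (q : ℂ) (f : LaurentSeries ℂ) : LaurentSeries ℂ :=
  ⟨fun n => q ^ n * f.coeff n,
    f.isPWO_support'.mono (by
      intro n hn
      simp only [Function.mem_support] at hn ⊢
      exact fun h => hn (by rw [h, mul_zero]))⟩

/-- `x` as a Laurent series. -/
def Xl : LaurentSeries ℂ := HahnSeries.single 1 1

/-- `P_n = ∑_{k=0}^{n-1} (−x σ_q)ᵏ P` (so `P₀ = 0`). -/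
def Pq (q : ℂ) (P : LaurentSeries ℂ) (n : ℕ) : LaurentSeries ℂ :=
  ∑ k ∈ Finset.range n, (fun g => -Xl * sigmaq q g)^[k] P

/-- The operators `L_{n,k}`: `L_{n,0} = id`,
`L_{n,k+1} = (1/P_{k+1})(x^{n−k} σ_q − (−1)^{n−k}) ∘ L_{n,k}`
(in particular `L_{n,1} = (1/P₁)(xⁿ σ_q − (−1)ⁿ)`). -/
def Lnk (q : ℂ) (P : LaurentSeries ℂ) (n : ℕ) : ℕ → LaurentSeries ℂ → LaurentSeries ℂ
  | 0 => id
  | k + 1 => fun g =>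
      (Pq q P (k + 1))⁻¹ *
        (Xl ^ (n - k) * sigmaq q (Lnk q P n k g)
          - (-1 : LaurentSeries ℂ) ^ (n - k) * Lnk q P n k g)

lemma sigmaq_coeff (q : ℂ) (f : LaurentSeries ℂ) (n : ℤ) :
    (sigmaq q f).coeff n = q ^ n * f.coeff n := rfl

lemma sigmaq_support (q : ℂ) (f : LaurentSeries ℂ) :
    (sigmaq q f).support ⊆ f.support := by
  intro n hn
  simp only [HahnSeries.mem_support, sigmaq_coeff] at hn ⊢
  exact fun h => hn (by rw [h, mul_zero])

lemma sigmaq_add (q : ℂ) (f g : LaurentSeries ℂ) :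
    sigmaq q (f + g) = sigmaq q f + sigmaq q g := by
  ext n
  simp [sigmaq_coeff, mul_add]

lemma sigmaq_one (q : ℂ) : sigmaq q 1 = 1 := by
  ext n
  rw [sigmaq_coeff]
  rcases eq_or_ne n 0 with rfl | h
  · simp
  · simp [HahnSeries.coeff_one, h]

lemma sigmaq_mul (q : ℂ) (hq : q ≠ 0) (f g : LaurentSeries ℂ) :
    sigmaq q (f * g) = sigmaq q f * sigmaq q g := by
  ext a
  rw [sigmaq_coeff, HahnSeries.coeff_mul,
    HahnSeries.coeff_mul_left' f.isPWO_support (sigmaq_support q f)]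
  rw [show (∑ ij ∈ Finset.antidiagonal f.isPWO_support (sigmaq q g).isPWO_support a,
        (sigmaq q f).coeff ij.1 * (sigmaq q g).coeff ij.2)
      = ∑ ij ∈ Finset.antidiagonal f.isPWO_support g.isPWO_support a,
        (sigmaq q f).coeff ij.1 * (sigmaq q g).coeff ij.2 from
    Finset.sum_subset (fun ij hij => ?_) (fun ij hmem hij => ?_)]
  · rw [Finset.mul_sum]
    refine Finset.sum_congr rfl (fun ij hij => ?_)
    rw [Finset.mem_addAntidiagonal] at hij
    rw [sigmaq_coeff, sigmaq_coeff, ← hij.2.2, zpow_add₀ hq]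
    ring
  · rw [Finset.mem_addAntidiagonal] at hij ⊢
    exact ⟨hij.1, sigmaq_support q g hij.2.1, hij.2.2⟩
  · rw [Finset.mem_addAntidiagonal] at hij
    push_neg at hij
    by_cases h1 : ij.1 ∈ f.support
    · by_cases h2 : ij.2 ∈ (sigmaq q g).support
      · rw [Finset.mem_addAntidiagonal] at hmem
        exact absurd hmem.2.2 (hij h1 h2)
      · simp only [HahnSeries.mem_support, not_not] at h2
        rw [h2, mul_zero]
    · have : (sigmaq q f).coeff ij.1 = 0 := by
        by_contra hc
        exact h1 (sigmaq_support q f hc)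
      rw [this, zero_mul]

/-- `σ_q` as a ring homomorphism (for `q ≠ 0`). -/

def sigmaqRH (q : ℂ) (hq : q ≠ 0) : LaurentSeries ℂ →+* LaurentSeries ℂ where
  toFun := sigmaq q
  map_one' := sigmaq_one q
  map_mul' := sigmaq_mul q hq
  map_zero' := by ext n; simp [sigmaq_coeff]
  map_add' := sigmaq_add q

lemma sigmaqRH_apply (q : ℂ) (hq : q ≠ 0) (f : LaurentSeries ℂ) :
    sigmaqRH q hq f = sigmaq q f := rfl

lemma Xl_ne_zero : Xl ≠ 0 := HahnSeries.single_ne_zero one_ne_zero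

lemma Xl_mul_coeff (g : LaurentSeries ℂ) (a : ℤ) :
    (Xl * g).coeff a = g.coeff (a - 1) := by
  have := HahnSeries.coeff_single_mul_add (r := (1:ℂ)) (x := g) (a := a - 1) (b := 1)
  rw [sub_add_cancel] at this
  rw [Xl, this, one_mul]

lemma Pq_zero (q : ℂ) (P : LaurentSeries ℂ) : Pq q P 0 = 0 := by
  simp [Pq]

lemma Pq_succ (q : ℂ) (hq : q ≠ 0) (P : LaurentSeries ℂ) (j : ℕ) :
    Pq q P (j + 1) = P - Xl * sigmaq q (Pq q P j) := by
  rw [Pq, Finset.sum_range_succ']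
  simp only [Function.iterate_succ_apply', Function.iterate_zero_apply]
  rw [← sigmaqRH_apply q hq, Pq, map_sum, Finset.mul_sum]
  rw [add_comm, sub_eq_add_neg, ← Finset.sum_neg_distrib]
  congr 1
  exact Finset.sum_congr rfl fun k _ => by rw [sigmaqRH_apply]; ring

/-- coefficient formula for the iterates `(−xσ_q)ᵏ P`. -/

lemma Tpow_coeff (q : ℂ) (hq : q ≠ 0) (P : LaurentSeries ℂ) (j : ℕ) (a : ℤ) :
    ∃ c : ℂ, c ≠ 0 ∧ ((fun g => -Xl * sigmaq q g)^[j] P).coeff a = c * P.coeff (a - j) := by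
  induction j generalizing a with
  | zero => exact ⟨1, one_ne_zero, by simp⟩
  | succ j ih =>
    simp only [Function.iterate_succ_apply']
    obtain ⟨c, hc, hcoeff⟩ := ih (a - 1)
    refine ⟨-q ^ (a - 1) * c, by
      simp only [neg_mul, ne_eq, neg_eq_zero, mul_eq_zero, not_or]
      exact ⟨zpow_ne_zero _ hq, hc⟩, ?_⟩
    rw [neg_mul Xl (sigmaq q ((fun g => -Xl * sigmaq q g)^[j] P)), HahnSeries.coeff_neg,
      Xl_mul_coeff, sigmaq_coeff, hcoeff]
    push_cast
    ring_nf

lemma Pq_sub_ne_zero (q : ℂ) (hq : q ≠ 0) (P : LaurentSeries ℂ) (hP : P ≠ 0)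
    {i j : ℕ} (hij : i < j) : Pq q P j - Pq q P i ≠ 0 := by
  intro h0
  have hsum : Pq q P j - Pq q P i
      = ∑ k ∈ Finset.Ico i j, (fun g => -Xl * sigmaq q g)^[k] P := by
    rw [Pq, Pq, eq_comm, Finset.sum_Ico_eq_sub _ hij.le]
  set a₀ : ℤ := (i : ℤ) + P.order with ha₀
  have hco : (Pq q P j - Pq q P i).coeff a₀
      = ∑ k ∈ Finset.Ico i j, ((fun g => -Xl * sigmaq q g)^[k] P).coeff a₀ := by
    rw [hsum, ← HahnSeries.coeff.addMonoidHom_apply, map_sum]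
    rfl
  have hzero : ∀ k ∈ Finset.Ico i j, k ≠ i →
      ((fun g => -Xl * sigmaq q g)^[k] P).coeff a₀ = 0 := by
    intro k hk hki
    obtain ⟨c, _, hc⟩ := Tpow_coeff q hq P k a₀
    rw [hc, HahnSeries.coeff_eq_zero_of_lt_order, mul_zero]
    rw [Finset.mem_Ico] at hk
    have : (i : ℤ) < k := by exact_mod_cast lt_of_le_of_ne hk.1 (Ne.symm hki)
    omega
  have hisum : (Pq q P j - Pq q P i).coeff a₀
      = ((fun g => -Xl * sigmaq q g)^[i] P).coeff a₀ := by
    rw [hco]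
    exact Finset.sum_eq_single_of_mem i (Finset.mem_Ico.2 ⟨le_refl i, hij⟩) hzero
  obtain ⟨c, hc0, hc⟩ := Tpow_coeff q hq P i a₀
  rw [h0, HahnSeries.coeff_zero] at hisum
  rw [hc] at hisum
  have : P.coeff (a₀ - i) ≠ 0 := by
    have : a₀ - (i:ℤ) = P.order := by omega
    rw [this]
    exact fun h => hP (HahnSeries.coeff_order_eq_zero.1 h)
  exact this (by
    rcases mul_eq_zero.1 hisum.symm with h | h
    · exact absurd h hc0
    · exact h)

lemma Pq_succ_ne_zero (q : ℂ) (hq : q ≠ 0) (P : LaurentSeries ℂ) (hP : P ≠ 0) (k : ℕ) :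
    Pq q P (k + 1) ≠ 0 := by
  have := Pq_sub_ne_zero q hq P hP (Nat.succ_pos k)
  rwa [Pq_zero, sub_zero] at this

lemma Pq_sub_ne_zero' (q : ℂ) (hq : q ≠ 0) (P : LaurentSeries ℂ) (hP : P ≠ 0)
    {i j : ℕ} (h : i ≠ j) : Pq q P i - Pq q P j ≠ 0 := by
  rcases h.lt_or_gt with h' | h'
  · intro h0
    apply Pq_sub_ne_zero q hq P hP h'
    rw [← neg_sub, h0, neg_zero]
  · exact Pq_sub_ne_zero q hq P hP h'

lemma Xl_sigmaq_f (q : ℂ) (hq : q ≠ 0) (f P : LaurentSeries ℂ)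
    (hf : Xl * sigmaq q f + f = P) (j : ℕ) :
    Xl * sigmaq q (f - Pq q P j) = -(f - Pq q P (j + 1)) := by
  have h1 := Pq_succ q hq P j
  have h2 : sigmaq q (f - Pq q P j) = sigmaq q f - sigmaq q (Pq q P j) :=
    map_sub (sigmaqRH q hq) _ _
  rw [h2]
  linear_combination hf - h1

lemma Xl_sigmaq_P (q : ℂ) (hq : q ≠ 0) (P : LaurentSeries ℂ) (j ℓ : ℕ) :
    Xl * sigmaq q (Pq q P j - Pq q P ℓ) = -(Pq q P (j + 1) - Pq q P (ℓ + 1)) := by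
  have h1 := Pq_succ q hq P j
  have h2 := Pq_succ q hq P ℓ
  have h3 : sigmaq q (Pq q P j - Pq q P ℓ) = sigmaq q (Pq q P j) - sigmaq q (Pq q P ℓ) :=
    map_sub (sigmaqRH q hq) _ _
  rw [h3]
  linear_combination h1 - h2

lemma prod_shift (q : ℂ) (hq : q ≠ 0) (P : LaurentSeries ℂ) (k j : ℕ)
    (hj : j ∈ Finset.range (k + 1)) :
    Xl ^ k * sigmaq q (∏ ℓ ∈ (Finset.range (k + 1)).erase j, (Pq q P j - Pq q P ℓ))
      = (-1 : LaurentSeries ℂ) ^ k *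
          ∏ ℓ ∈ (Finset.range (k + 1)).erase j, (Pq q P (j + 1) - Pq q P (ℓ + 1)) := by
  have hcard : ((Finset.range (k + 1)).erase j).card = k := by
    rw [Finset.card_erase_of_mem hj, Finset.card_range]; omega
  rw [← sigmaqRH_apply q hq, map_prod]
  rw [show Xl ^ k = ∏ _ℓ ∈ (Finset.range (k + 1)).erase j, Xl from by
    rw [Finset.prod_const, hcard]]
  rw [show ((-1 : LaurentSeries ℂ) ^ k *
      ∏ ℓ ∈ (Finset.range (k + 1)).erase j, (Pq q P (j + 1) - Pq q P (ℓ + 1)))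
      = ∏ ℓ ∈ (Finset.range (k + 1)).erase j,
          (-1 : LaurentSeries ℂ) * (Pq q P (j + 1) - Pq q P (ℓ + 1)) from by
    rw [Finset.prod_mul_distrib, Finset.prod_const, hcard]]
  rw [← Finset.prod_mul_distrib]
  exact Finset.prod_congr rfl fun ℓ _ => by
    rw [sigmaqRH_apply, Xl_sigmaq_P q hq P]; ring

lemma pow_shift (q : ℂ) (hq : q ≠ 0) (f P : LaurentSeries ℂ)
    (hf : Xl * sigmaq q f + f = P) (n j : ℕ) :
    Xl ^ n * (sigmaq q (f - Pq q P j)) ^ n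
      = (-1 : LaurentSeries ℂ) ^ n * (f - Pq q P (j + 1)) ^ n := by
  rw [← mul_pow, Xl_sigmaq_f q hq f P hf j, neg_pow (f - Pq q P (j + 1)) n]

lemma Aprod_top (q : ℂ) (P : LaurentSeries ℂ) (k j : ℕ) (hj : j ≤ k) :
    ∏ ℓ ∈ (Finset.range (k + 2)).erase j, (Pq q P j - Pq q P ℓ)
      = (Pq q P j - Pq q P (k + 1)) *
          ∏ ℓ ∈ (Finset.range (k + 1)).erase j, (Pq q P j - Pq q P ℓ) := by
  rw [show (Finset.range (k + 2)).erase j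
      = insert (k + 1) ((Finset.range (k + 1)).erase j) from by
    ext a; simp only [Finset.mem_erase, Finset.mem_range, Finset.mem_insert]; omega]
  rw [Finset.prod_insert (by simp)]

lemma Aprod_zero (q : ℂ) (P : LaurentSeries ℂ) (k j : ℕ) :
    ∏ ℓ ∈ (Finset.range (k + 2)).erase (j + 1), (Pq q P (j + 1) - Pq q P ℓ)
      = Pq q P (j + 1) *
          ∏ ℓ ∈ (Finset.range (k + 1)).erase j, (Pq q P (j + 1) - Pq q P (ℓ + 1)) := by
  have h0 : (0 : ℕ) ∈ (Finset.range (k + 2)).erase (j + 1) := by simp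
  rw [← Finset.mul_prod_erase _ _ h0, Pq_zero, sub_zero]
  congr 1
  rw [show ((Finset.range (k + 2)).erase (j + 1)).erase 0
      = Finset.image (· + 1) ((Finset.range (k + 1)).erase j) from by
    ext a
    simp only [Finset.mem_erase, Finset.mem_range, Finset.mem_image]
    constructor
    · rintro ⟨h1, h2, h3⟩
      exact ⟨a - 1, by omega, by omega⟩
    · rintro ⟨b, hb, rfl⟩
      omega]
  rw [Finset.prod_image (fun a _ b _ h => by omega)]

lemma exponent_step (n k : ℕ) (h : k + 1 ≤ n) :
    (k + 1) * (2 * n - (k + 1) + 1) / 2 = k * (2 * n - k + 1) / 2 + (n - k) := by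
  obtain ⟨a, rfl⟩ : ∃ a, n = k + a := ⟨n - k, by omega⟩
  have h1 : 2 * (k + a) - k + 1 = k + 2 * a + 1 := by omega
  have h2 : 2 * (k + a) - (k + 1) + 1 = k + 2 * a := by omega
  rw [h1, h2]
  have hev1 : 2 ∣ (k + 1) * (k + 2 * a) := by
    rcases Nat.even_or_odd k with hk | hk
    · exact Dvd.dvd.mul_left (even_iff_two_dvd.1 (hk.add (even_two_mul a))) _
    · exact Dvd.dvd.mul_right (even_iff_two_dvd.1 hk.add_one) _
  have hev2 : 2 ∣ k * (k + 2 * a + 1) := by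
    rcases Nat.even_or_odd k with hk | hk
    · exact Dvd.dvd.mul_right (even_iff_two_dvd.1 hk) _
    · exact Dvd.dvd.mul_left (even_iff_two_dvd.1 ((hk.add_even (even_two_mul a)).add_one)) _
  obtain ⟨e1, he1⟩ := hev1
  obtain ⟨e2, he2⟩ := hev2
  have key : (k + 1) * (k + 2 * a) = k * (k + 2 * a + 1) + 2 * a := by ring
  rw [he1, he2] at key
  rw [he1, he2]
  omega

lemma Lnk_main (q : ℂ) (hq : q ≠ 0) (f P : LaurentSeries ℂ) (hP : P ≠ 0)
    (hf : Xl * sigmaq q f + f = P) (n : ℕ) :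
    ∀ k, k ≤ n → Lnk q P n k (f ^ n)
      = (-1 : LaurentSeries ℂ) ^ (k * (2 * n - k + 1) / 2) *
          ∑ j ∈ Finset.range (k + 1),
            (f - Pq q P j) ^ n /
              (∏ ℓ ∈ (Finset.range (k + 1)).erase j, (Pq q P j - Pq q P ℓ)) := by
  intro k
  induction k with
  | zero =>
    intro _
    simp [Lnk, Pq_zero]
  | succ k IH =>
    intro hk1n
    have hkn : k ≤ n := le_trans (Nat.le_succ k) hk1n
    have hIH := IH hkn
    have hPj1 : ∀ j : ℕ, Pq q P (j + 1) ≠ 0 := Pq_succ_ne_zero q hq P hP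
    have hPk1 : Pq q P (k + 1) ≠ 0 := hPj1 k
    have hPne : ∀ i j : ℕ, i ≠ j → Pq q P i - Pq q P j ≠ 0 := fun i j h =>
      Pq_sub_ne_zero' q hq P hP h
    have hBne : ∀ j : ℕ,
        (∏ ℓ ∈ (Finset.range (k + 1)).erase j, (Pq q P (j + 1) - Pq q P (ℓ + 1))) ≠ 0 :=
      fun j => Finset.prod_ne_zero_iff.2 fun ℓ hℓ =>
        hPne (j + 1) (ℓ + 1) (by
          have := Finset.ne_of_mem_erase hℓ
          omega)
    -- step 1 : unfold Lnk
    have h1 : Lnk q P n (k + 1) (f ^ n)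
        = (Pq q P (k + 1))⁻¹ *
            (Xl ^ (n - k) * sigmaq q (Lnk q P n k (f ^ n))
              - (-1 : LaurentSeries ℂ) ^ (n - k) * Lnk q P n k (f ^ n)) := rfl
    -- step 2 : push sigma through IH
    have h2 : sigmaq q (Lnk q P n k (f ^ n))
        = (-1 : LaurentSeries ℂ) ^ (k * (2 * n - k + 1) / 2) *
            ∑ j ∈ Finset.range (k + 1),
              (sigmaq q (f - Pq q P j)) ^ n /
                sigmaq q (∏ ℓ ∈ (Finset.range (k + 1)).erase j, (Pq q P j - Pq q P ℓ)) := by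
      rw [hIH, ← sigmaqRH_apply q hq, map_mul, map_pow, map_neg, map_one, map_sum]
      congr 1
      refine Finset.sum_congr rfl fun j _ => ?_
      rw [map_div₀, map_pow, sigmaqRH_apply, sigmaqRH_apply]
    -- step 3 : termwise shift
    have h3 : ∀ j ∈ Finset.range (k + 1),
        Xl ^ (n - k) *
            ((sigmaq q (f - Pq q P j)) ^ n /
              sigmaq q (∏ ℓ ∈ (Finset.range (k + 1)).erase j, (Pq q P j - Pq q P ℓ)))
          = (-1 : LaurentSeries ℂ) ^ (n - k) *
              ((f - Pq q P (j + 1)) ^ n /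
                ∏ ℓ ∈ (Finset.range (k + 1)).erase j, (Pq q P (j + 1) - Pq q P (ℓ + 1))) := by
      intro j hj
      have hx : Xl ^ (n - k) = Xl ^ n / Xl ^ k := by
        rw [eq_div_iff (pow_ne_zero k Xl_ne_zero), ← pow_add]
        congr 1; omega
      have hs : (-1 : LaurentSeries ℂ) ^ (n - k) = (-1) ^ n / (-1) ^ k := by
        rw [eq_div_iff (pow_ne_zero k (neg_ne_zero.2 one_ne_zero)), ← pow_add]
        congr 1; omega
      rw [hx, hs, div_mul_div_comm, pow_shift q hq f P hf n j, prod_shift q hq P k j hj,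
        div_mul_div_comm]
    -- step 4 : full first term
    have h4 : Xl ^ (n - k) * sigmaq q (Lnk q P n k (f ^ n))
        = (-1 : LaurentSeries ℂ) ^ (k * (2 * n - k + 1) / 2) *
            ((-1 : LaurentSeries ℂ) ^ (n - k) *
              ∑ j ∈ Finset.range (k + 1),
                (f - Pq q P (j + 1)) ^ n /
                  ∏ ℓ ∈ (Finset.range (k + 1)).erase j, (Pq q P (j + 1) - Pq q P (ℓ + 1))) := by
      rw [h2, mul_left_comm]
      congr 1
      rw [Finset.mul_sum, Finset.mul_sum]
      exact Finset.sum_congr rfl h3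
    -- sum identity
    have e1 : ∀ j ∈ Finset.range (k + 1),
        (f - Pq q P (j + 1)) ^ n /
            ∏ ℓ ∈ (Finset.range (k + 1)).erase j, (Pq q P (j + 1) - Pq q P (ℓ + 1))
          = Pq q P (j + 1) *
              ((f - Pq q P (j + 1)) ^ n /
                ∏ ℓ ∈ (Finset.range (k + 2)).erase (j + 1), (Pq q P (j + 1) - Pq q P ℓ)) := by
      intro j _
      rw [Aprod_zero q P k j, ← mul_div_assoc,
        mul_div_mul_left ((f - Pq q P (j + 1)) ^ n)
          (∏ ℓ ∈ (Finset.range (k + 1)).erase j, (Pq q P (j + 1) - Pq q P (ℓ + 1))) (hPj1 j)]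
    have e2 : ∀ j ∈ Finset.range (k + 1),
        (f - Pq q P j) ^ n /
            ∏ ℓ ∈ (Finset.range (k + 1)).erase j, (Pq q P j - Pq q P ℓ)
          = (Pq q P j - Pq q P (k + 1)) *
              ((f - Pq q P j) ^ n /
                ∏ ℓ ∈ (Finset.range (k + 2)).erase j, (Pq q P j - Pq q P ℓ)) := by
      intro j hj
      rw [Finset.mem_range] at hj
      rw [Aprod_top q P k j (by omega), ← mul_div_assoc,
        mul_div_mul_left ((f - Pq q P j) ^ n)
          (∏ ℓ ∈ (Finset.range (k + 1)).erase j, (Pq q P j - Pq q P ℓ))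
          (hPne j (k + 1) (by omega))]
    have key : (∑ j ∈ Finset.range (k + 1),
          (f - Pq q P (j + 1)) ^ n /
            ∏ ℓ ∈ (Finset.range (k + 1)).erase j, (Pq q P (j + 1) - Pq q P (ℓ + 1)))
        - ∑ j ∈ Finset.range (k + 1),
            (f - Pq q P j) ^ n /
              ∏ ℓ ∈ (Finset.range (k + 1)).erase j, (Pq q P j - Pq q P ℓ)
        = Pq q P (k + 1) *
            ∑ j ∈ Finset.range (k + 2),
              (f - Pq q P j) ^ n /
                ∏ ℓ ∈ (Finset.range (k + 2)).erase j, (Pq q P j - Pq q P ℓ) := by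
      rw [Finset.sum_congr rfl e1, Finset.sum_congr rfl e2]
      have e3 : ∑ j ∈ Finset.range (k + 2),
          Pq q P j * ((f - Pq q P j) ^ n /
            ∏ ℓ ∈ (Finset.range (k + 2)).erase j, (Pq q P j - Pq q P ℓ))
          = ∑ j ∈ Finset.range (k + 1),
              Pq q P (j + 1) * ((f - Pq q P (j + 1)) ^ n /
                ∏ ℓ ∈ (Finset.range (k + 2)).erase (j + 1), (Pq q P (j + 1) - Pq q P ℓ)) := by
        rw [Finset.sum_range_succ'
          (fun j => Pq q P j * ((f - Pq q P j) ^ n /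
            ∏ ℓ ∈ (Finset.range (k + 2)).erase j, (Pq q P j - Pq q P ℓ))) (k + 1)]
        rw [Pq_zero, zero_mul, add_zero]
      rw [← e3]
      rw [Finset.sum_range_succ
        (fun j => Pq q P j * ((f - Pq q P j) ^ n /
          ∏ ℓ ∈ (Finset.range (k + 2)).erase j, (Pq q P j - Pq q P ℓ))) (k + 1)]
      rw [Finset.sum_range_succ
        (fun j => (f - Pq q P j) ^ n /
          ∏ ℓ ∈ (Finset.range (k + 2)).erase j, (Pq q P j - Pq q P ℓ)) (k + 1)]
      rw [show ∑ j ∈ Finset.range (k + 1),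
          (Pq q P j - Pq q P (k + 1)) * ((f - Pq q P j) ^ n /
            ∏ ℓ ∈ (Finset.range (k + 2)).erase j, (Pq q P j - Pq q P ℓ))
          = (∑ j ∈ Finset.range (k + 1),
              Pq q P j * ((f - Pq q P j) ^ n /
                ∏ ℓ ∈ (Finset.range (k + 2)).erase j, (Pq q P j - Pq q P ℓ)))
            - Pq q P (k + 1) * ∑ j ∈ Finset.range (k + 1),
                (f - Pq q P j) ^ n /
                  ∏ ℓ ∈ (Finset.range (k + 2)).erase j, (Pq q P j - Pq q P ℓ) from by
        rw [Finset.mul_sum, ← Finset.sum_sub_distrib]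
        exact Finset.sum_congr rfl fun j _ => by ring]
      ring
    -- final assembly
    rw [h1, h4, hIH]
    rw [show (-1 : LaurentSeries ℂ) ^ (k * (2 * n - k + 1) / 2) *
          ((-1 : LaurentSeries ℂ) ^ (n - k) *
            ∑ j ∈ Finset.range (k + 1),
              (f - Pq q P (j + 1)) ^ n /
                ∏ ℓ ∈ (Finset.range (k + 1)).erase j, (Pq q P (j + 1) - Pq q P (ℓ + 1)))
        - (-1 : LaurentSeries ℂ) ^ (n - k) *
            ((-1 : LaurentSeries ℂ) ^ (k * (2 * n - k + 1) / 2) *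
              ∑ j ∈ Finset.range (k + 1),
                (f - Pq q P j) ^ n /
                  ∏ ℓ ∈ (Finset.range (k + 1)).erase j, (Pq q P j - Pq q P ℓ))
        = (-1 : LaurentSeries ℂ) ^ (k * (2 * n - k + 1) / 2) *
            (-1 : LaurentSeries ℂ) ^ (n - k) *
            ((∑ j ∈ Finset.range (k + 1),
              (f - Pq q P (j + 1)) ^ n /
                ∏ ℓ ∈ (Finset.range (k + 1)).erase j, (Pq q P (j + 1) - Pq q P (ℓ + 1)))
             - ∑ j ∈ Finset.range (k + 1),
                (f - Pq q P j) ^ n /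
                  ∏ ℓ ∈ (Finset.range (k + 1)).erase j, (Pq q P j - Pq q P ℓ)) from by ring]
    rw [key]
    rw [show (-1 : LaurentSeries ℂ) ^ ((k + 1) * (2 * n - (k + 1) + 1) / 2)
        = (-1 : LaurentSeries ℂ) ^ (k * (2 * n - k + 1) / 2) *
            (-1 : LaurentSeries ℂ) ^ (n - k) from by
      rw [← pow_add, exponent_step n k hk1n]]
    field_simp

/-- Lemma 2.2: for `1 ≤ k ≤ n`,
`L_{n,k}(fⁿ) = (−1)^{k(2n−k+1)/2} ∑_{j=0}^{k} (f − P_j)ⁿ / A_{k,j}`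
with `A_{k,j} = ∏_{ℓ≠j, 0≤ℓ≤k} (P_j − P_ℓ)`. -/
theorem Lnk_apply_pow (q : ℂ) (hq : q ≠ 0) (f P : LaurentSeries ℂ) (hP : P ≠ 0)
    (hf : Xl * sigmaq q f + f = P) (n k : ℕ) (hk1 : 1 ≤ k) (hkn : k ≤ n) :
    Lnk q P n k (f ^ n)
      = (-1 : LaurentSeries ℂ) ^ (k * (2 * n - k + 1) / 2) *
          ∑ j ∈ Finset.range (k + 1),
            (f - Pq q P j) ^ n /
              (∏ ℓ ∈ (Finset.range (k + 1)).erase j, (Pq q P j - Pq q P ℓ)) :=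
  Lnk_main q hq f P hP hf n k hkn

end
end

section
/- Let Ê(x) = ∑_{n≥0} (−1)ⁿ n! x^{n+1} ∈ ℂ[[x]] and Y = Ê(x)². Then Y satisfies the second-order ODE (x δ + 1 − x)(x δ + 2) Y = 2x², where δ = x·d/dx acting on formal power series. -/
noncomputable section

/-- The Euler series `Ê(x) = ∑_{n≥0} (−1)ⁿ n! x^{n+1}`. -/
def eulerSeries : PowerSeries ℂ :=
  PowerSeries.mk fun m => if m = 0 then 0 else (-1) ^ (m - 1) * (Nat.factorial (m - 1) : ℂ)

open PowerSeries in
lemma eulerSeries_ode : X * (X * d⁄dX ℂ eulerSeries) + eulerSeries = X := by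
  ext n
  rcases n with _ | _ | n
  · simp [eulerSeries, PowerSeries.coeff_zero_X_mul]
  · simp [eulerSeries, PowerSeries.coeff_succ_X_mul]
  · simp only [map_add, PowerSeries.coeff_succ_X_mul, PowerSeries.coeff_derivative,
      eulerSeries, PowerSeries.coeff_mk, PowerSeries.coeff_X]
    simp [Nat.factorial_succ]
    ring

open PowerSeries in
/-- `Y = Ê²` satisfies `(x δ + 1 − x)(x δ + 2) Y = 2x²` with `δ = x d/dx`:
setting `Z = x·δ(Y) + 2Y`, one has `x·δ(Z) + (1 − x)·Z = 2x²`. -/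
theorem eulerSeries_sq_ode :
    X * (X * d⁄dX ℂ (X * (X * d⁄dX ℂ (eulerSeries ^ 2)) + 2 * eulerSeries ^ 2)) +
        (1 - X) * (X * (X * d⁄dX ℂ (eulerSeries ^ 2)) + 2 * eulerSeries ^ 2)
      = 2 * X ^ 2 := by
  set E := eulerSeries with hE
  have key := eulerSeries_ode
  rw [← hE] at key
  have hd2 : d⁄dX ℂ (E ^ 2) = 2 * E * d⁄dX ℂ E := by
    rw [pow_two, Derivation.leibniz]; simp [smul_eq_mul]; ring
  have hZ : X * (X * d⁄dX ℂ (E ^ 2)) + 2 * E ^ 2 = 2 * X * E := by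
    rw [hd2]; linear_combination (2 * E) * key
  rw [hZ]
  have hdZ : d⁄dX ℂ (2 * X * E) = 2 * E + 2 * X * d⁄dX ℂ E := by
    rw [Derivation.leibniz, Derivation.leibniz]
    have h2 : (d⁄dX ℂ) (2 : ℂ⟦X⟧) = 0 := by
      rw [show ((2 : ℂ⟦X⟧)) = ((2 : ℕ) : ℂ⟦X⟧) by norm_num, Derivation.map_natCast]
    simp [smul_eq_mul, h2]
    ring
  rw [hdZ]
  linear_combination (2 * X) * key

end
end
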